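/- Let d ≥ 1 and define p : ℝ^d × (0,∞) → ℝ by p(x₁,...,x_d,t) = 2 ∫₀^∞ (exp(−w²/(2t))/√(2πt)) · ∏_{k=1}^{d} (exp(−x_k²/(2w))/√(2πw)) dw. Then for every (x₁,...,x_d) ≠ 0 and t > 0, p satisfies ∂p/∂t = (1/8) (∑_{j=1}^{d} ∂²/∂x_j²)² p. -/

import Mathlib

/-
Write `s = |x|²`. The density is `c t^{-1/2} I(s, t, -d/2)`, where
`I(s, t, a) = ∫₀^∞ w^a e^{-s/2w} e^{-w²/2t} dw` is `subordIntegral`. Differentiating under the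
integral gives `∂_s I(a) = -I(a-1)/2` and `∂_t I(a) = I(a+2)/(2t²)`, and the Laplacian of a radial
function `Φ(|x|²)` is `2d Φ' + 4|x|² Φ''`, so both sides of the equation are explicit combinations
of the `I(b)`. They agree by the recurrence `a I(a-1) + (s/2) I(a-2) = I(a+1)/t`, which is the
integral over `(0, ∞)` of the `w`-derivative of the integrand: it vanishes because for `s > 0` the
integrand tends to `0` at both ends.
-/

open Real MeasureTheory

/-- Laplacian of a function on `ℝ^d`, as the sum of second coordinatewise derivatives. -/
noncomputable def laplacian {d : ℕ} (f : (Fin d → ℝ) → ℝ) (x : Fin d → ℝ) : ℝ :=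
  ∑ j : Fin d, iteratedDeriv 2 (fun h => f (Function.update x j h)) (x j)

/-- Joint density of the vector process `(B₁(|B(t)|), ..., B_d(|B(t)|))`. -/
noncomputable def iterBMDensityVec (d : ℕ) (x : Fin d → ℝ) (t : ℝ) : ℝ :=
  2 * ∫ w in Set.Ioi (0 : ℝ),
    (Real.exp (-w ^ 2 / (2 * t)) / Real.sqrt (2 * π * t)) *
      ∏ k : Fin d, Real.exp (-(x k) ^ 2 / (2 * w)) / Real.sqrt (2 * π * w)

open Filter Set Topology
open scoped Nat

lemma exp_neg_le_factorial_div_pow {y : ℝ} (hy : 0 < y) (n : ℕ) : exp (-y) ≤ n ! / y ^ n := by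
  rw [exp_neg, ← inv_div]
  exact inv_anti₀ (by positivity) (pow_div_factorial_le_exp _ hy.le n)

section Laplacian

variable {d : ℕ}

lemma laplacian_const_mul (c : ℝ) (f : (Fin d → ℝ) → ℝ) (x : Fin d → ℝ) :
    laplacian (fun y => c * f y) x = c * laplacian f x := by
  simp only [laplacian, iteratedDeriv_const_mul_field, Finset.mul_sum]

lemma sum_sq_update (y : Fin d → ℝ) (j : Fin d) (h : ℝ) :
    ∑ k, Function.update y j h k ^ 2 = (∑ k, y k ^ 2 - y j ^ 2) + h ^ 2 := by
  have : ∀ k, Function.update y j h k ^ 2 = Function.update (fun k => y k ^ 2) j (h ^ 2) k := by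
    intro k
    rcases eq_or_ne k j with rfl | hk <;> simp [*]
  simp only [this, Finset.sum_update_of_mem (Finset.mem_univ j), ← Finset.erase_eq,
    ← Finset.sum_erase_add _ _ (Finset.mem_univ j)]
  ring

lemma sum_sq_pos_of_ne_zero {x : Fin d → ℝ} (hx : x ≠ 0) : 0 < ∑ k, x k ^ 2 := by
  obtain ⟨j, hj⟩ := Function.ne_iff.1 hx
  exact (sq_pos_of_ne_zero hj).trans_le
    (Finset.single_le_sum (fun k _ => sq_nonneg (x k)) (Finset.mem_univ j))

lemma iteratedDeriv_two_comp_add_sq {f Φ Φ' Φ'' : ℝ → ℝ} {r b : ℝ} (hb : 0 < r + b ^ 2)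
    (hΦ : ∀ u, 0 < u → HasDerivAt Φ (Φ' u) u) (hΦ' : ∀ u, 0 < u → HasDerivAt Φ' (Φ'' u) u)
    (hf : ∀ h, 0 < r + h ^ 2 → f h = Φ (r + h ^ 2)) :
    iteratedDeriv 2 f b = 2 * Φ' (r + b ^ 2) + 4 * b ^ 2 * Φ'' (r + b ^ 2) := by
  have hq : ∀ h : ℝ, HasDerivAt (fun z => r + z ^ 2) (2 * h) h := fun h => by
    simpa using (hasDerivAt_pow 2 h).const_add r
  have hpos : ∀ᶠ h in 𝓝 b, 0 < r + h ^ 2 :=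
    continuousAt_const.eventually_lt (by fun_prop) hb
  have hderiv : deriv f =ᶠ[𝓝 b] fun h => Φ' (r + h ^ 2) * (2 * h) := by
    filter_upwards [hpos, hpos.eventually_nhds] with h hh hnear
    rw [Filter.EventuallyEq.deriv_eq (hnear.mono hf)]
    exact ((hΦ _ hh).comp h (hq h)).deriv
  have hderiv2 : HasDerivAt (fun h => Φ' (r + h ^ 2) * (2 * h))
      (Φ'' (r + b ^ 2) * (2 * b) * (2 * b) + Φ' (r + b ^ 2) * 2) b :=
    ((hΦ' _ hb).comp b (hq b)).mul ((hasDerivAt_id b).const_mul 2 |>.congr_deriv (mul_one 2))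
  rw [iteratedDeriv_succ, iteratedDeriv_one, hderiv.deriv_eq, hderiv2.deriv]
  ring

lemma laplacian_eq_of_radial {f : (Fin d → ℝ) → ℝ} {Φ Φ' Φ'' : ℝ → ℝ} {x : Fin d → ℝ}
    (hΦ : ∀ u, 0 < u → HasDerivAt Φ (Φ' u) u) (hΦ' : ∀ u, 0 < u → HasDerivAt Φ' (Φ'' u) u)
    (hf : ∀ y, 0 < ∑ k, y k ^ 2 → f y = Φ (∑ k, y k ^ 2)) (hx : 0 < ∑ k, x k ^ 2) :
    laplacian f x = 2 * d * Φ' (∑ k, x k ^ 2) + 4 * (∑ k, x k ^ 2) * Φ'' (∑ k, x k ^ 2) := by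
  set s := ∑ k, x k ^ 2
  have hcoord : ∀ j, iteratedDeriv 2 (fun h => f (Function.update x j h)) (x j)
      = 2 * Φ' s + 4 * x j ^ 2 * Φ'' s := by
    intro j
    have hb : 0 < (s - x j ^ 2) + x j ^ 2 := by rwa [sub_add_cancel]
    rw [iteratedDeriv_two_comp_add_sq hb hΦ hΦ', sub_add_cancel]
    intro h hh
    rw [← sum_sq_update] at hh ⊢
    exact hf _ hh
  simp only [laplacian, hcoord, Finset.sum_add_distrib, ← Finset.sum_mul, ← Finset.mul_sum,
    Finset.sum_const, Finset.card_univ, Fintype.card_fin, nsmul_eq_mul]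
  ring

end Laplacian

lemma integral_Ioi_of_hasDerivAt_of_tendsto_nhdsGT {f f' : ℝ → ℝ} {a m n : ℝ}
    (hderiv : ∀ x ∈ Ioi a, HasDerivAt f (f' x) x) (hint : IntegrableOn f' (Ioi a))
    (hleft : Tendsto f (𝓝[>] a) (𝓝 m)) (hright : Tendsto f atTop (𝓝 n)) :
    ∫ x in Ioi a, f' x = n - m := by
  set g := Function.update f a m
  have hga : g a = m := Function.update_self a m f
  have hgf : ∀ x, x ≠ a → g x = f x := fun x hx => Function.update_of_ne hx m f
  have hcont : ContinuousWithinAt g (Ici a) a := by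
    refine continuousWithinAt_Ioi_iff_Ici.1 ?_
    rw [ContinuousWithinAt, hga]
    exact hleft.congr' (eventually_nhdsWithin_of_forall fun x hx => (hgf x (ne_of_gt hx)).symm)
  have hderiv' : ∀ x ∈ Ioi a, HasDerivAt g (f' x) x := fun x hx =>
    (hderiv x hx).congr_of_eventuallyEq
      ((eventually_ne_nhds (ne_of_gt hx)).mono fun y hy => hgf y hy)
  have hright' : Tendsto g atTop (𝓝 n) :=
    hright.congr' ((eventually_ne_atTop a).mono fun x hx => (hgf x hx).symm)
  rw [integral_Ioi_of_hasDerivAt_of_tendsto hcont hderiv' hint hright', hga]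

section SubordIntegral

noncomputable def subordKernel (s t a w : ℝ) : ℝ :=
  w ^ a * exp (-s / (2 * w)) * exp (-w ^ 2 / (2 * t))

noncomputable def subordIntegral (s t a : ℝ) : ℝ :=
  ∫ w in Ioi 0, subordKernel s t a w

variable {s t : ℝ}

lemma subordKernel_nonneg {w : ℝ} (hw : 0 ≤ w) (a : ℝ) : 0 ≤ subordKernel s t a w := by
  unfold subordKernel; positivity

lemma continuousOn_subordKernel (s t a : ℝ) : ContinuousOn (subordKernel s t a) (Ioi 0) := by
  intro w (hw : 0 < w)
  unfold subordKernel
  exact ContinuousAt.continuousWithinAt (by fun_prop (disch := simp [hw.ne']))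

lemma integrableOn_subordKernel (hs : 0 < s) (ht : 0 < t) (a : ℝ) :
    IntegrableOn (subordKernel s t a) (Ioi 0) := by
  obtain ⟨n, hn⟩ := exists_nat_gt (-a)
  have hmaj : IntegrableOn (fun w : ℝ => w ^ (a + n) * exp (-(1 / (2 * t)) * w ^ 2)) (Ioi 0) :=
    integrableOn_rpow_mul_exp_neg_mul_sq (by positivity) (by linarith)
  refine (hmaj.const_mul (n ! * (2 / s) ^ n)).mono'
    ((continuousOn_subordKernel s t a).aestronglyMeasurable measurableSet_Ioi) ?_
  filter_upwards [ae_restrict_mem measurableSet_Ioi] with w (hw : 0 < w)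
  have hexp : exp (-s / (2 * w)) ≤ n ! / (s / (2 * w)) ^ n := by
    rw [neg_div]; exact exp_neg_le_factorial_div_pow (by positivity) n
  rw [Real.norm_of_nonneg (subordKernel_nonneg hw.le a)]
  calc subordKernel s t a w
      ≤ w ^ a * (n ! / (s / (2 * w)) ^ n) * exp (-w ^ 2 / (2 * t)) := by
        unfold subordKernel; gcongr
    _ = n ! * (2 / s) ^ n * (w ^ (a + n) * exp (-(1 / (2 * t)) * w ^ 2)) := by
      rw [rpow_add_natCast hw.ne', show -(1 / (2 * t)) * w ^ 2 = -w ^ 2 / (2 * t) by ring,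
        div_pow, div_pow, mul_pow]
      field_simp

lemma subordKernel_anti_fst {s' w : ℝ} (hw : 0 < w) (hss' : s ≤ s') (a : ℝ) :
    subordKernel s' t a w ≤ subordKernel s t a w := by
  unfold subordKernel; gcongr

lemma subordKernel_mono_snd {t' w : ℝ} (hw : 0 ≤ w) (ht : 0 < t) (htt' : t ≤ t') (a : ℝ) :
    subordKernel s t a w ≤ subordKernel s t' a w := by
  unfold subordKernel
  simp only [neg_div]
  gcongr

lemma hasDerivAt_subordKernel (ht : t ≠ 0) {w : ℝ} (hw : 0 < w) (a : ℝ) :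
    HasDerivAt (subordKernel s t a)
      (a * subordKernel s t (a - 1) w + s / 2 * subordKernel s t (a - 2) w
        - subordKernel s t (a + 1) w / t) w := by
  have h1 : HasDerivAt (fun w => -s / (2 * w)) (s / (2 * w ^ 2)) w := by
    have e : (fun w : ℝ => -s / (2 * w)) = fun y => -s / 2 * y⁻¹ := by ext y; ring
    rw [e]
    exact ((hasDerivAt_inv hw.ne').const_mul _).congr_deriv (by ring)
  have h2 : HasDerivAt (fun w => -w ^ 2 / (2 * t)) (-w / t) w := by
    have e : (fun w : ℝ => -w ^ 2 / (2 * t)) = fun y => -(1 / (2 * t)) * y ^ 2 := by ext y; ring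
    rw [e]
    exact ((hasDerivAt_pow 2 w).const_mul _).congr_deriv (by push_cast; ring)
  refine (((hasDerivAt_rpow_const (p := a) (Or.inl hw.ne')).mul h1.exp).mul h2.exp).congr_deriv ?_
  simp only [subordKernel, Pi.mul_apply, rpow_sub_one hw.ne', rpow_add_one hw.ne',
    show a - 2 = a - (2 : ℕ) by norm_num, rpow_sub_natCast hw.ne']
  field_simp
  ring

lemma tendsto_subordKernel_nhdsGT_zero (hs : 0 < s) (a : ℝ) :
    Tendsto (subordKernel s t a) (𝓝[>] 0) (𝓝 0) := by
  have hleft : Tendsto (fun w : ℝ => w ^ a * exp (-s / (2 * w))) (𝓝[>] 0) (𝓝 0) := by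
    refine ((tendsto_rpow_mul_exp_neg_mul_atTop_nhds_zero (-a) (s / 2) (by positivity)).comp
      tendsto_inv_nhdsGT_zero).congr' ?_
    filter_upwards [self_mem_nhdsWithin] with w (hw : 0 < w)
    rw [Function.comp_apply, inv_rpow hw.le, ← rpow_neg hw.le, neg_neg]
    congr 2
    field_simp
  have hright : Tendsto (fun w : ℝ => exp (-w ^ 2 / (2 * t))) (𝓝[>] 0) (𝓝 1) := by
    have : Continuous (fun w : ℝ => exp (-w ^ 2 / (2 * t))) := by fun_prop
    simpa using (this.tendsto 0).mono_left nhdsWithin_le_nhds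
  have h := hleft.mul hright
  rw [mul_one] at h
  exact h

lemma tendsto_subordKernel_atTop (ht : 0 < t) (a : ℝ) :
    Tendsto (subordKernel s t a) atTop (𝓝 0) := by
  have hleft : Tendsto (fun w : ℝ => w ^ a * exp (-(1 / (2 * t)) * w ^ 2)) atTop (𝓝 0) :=
    (rpow_mul_exp_neg_mul_sq_isLittleO_exp_neg (by positivity) a).tendsto_zero_of_tendsto
      (tendsto_exp_atBot.comp (tendsto_id.const_mul_atTop_of_neg (by norm_num)))
  have hright : Tendsto (fun w : ℝ => exp (-s / (2 * w))) atTop (𝓝 1) := by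
    have h0 : Tendsto (fun w : ℝ => -s / (2 * w)) atTop (𝓝 0) :=
      tendsto_const_nhds.div_atTop (tendsto_id.const_mul_atTop two_pos)
    have h := (continuous_exp.tendsto 0).comp h0
    rw [exp_zero] at h
    exact h
  have h := hleft.mul hright
  rw [zero_mul] at h
  refine h.congr' (.of_forall fun w => ?_)
  simp only [subordKernel]
  ring_nf

lemma subordIntegral_recurrence (hs : 0 < s) (ht : 0 < t) (a : ℝ) :
    a * subordIntegral s t (a - 1) + s / 2 * subordIntegral s t (a - 2)
      = subordIntegral s t (a + 1) / t := by
  have hint : ∀ b, Integrable (subordKernel s t b) (volume.restrict (Ioi 0)) :=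
    integrableOn_subordKernel hs ht
  have h := integral_Ioi_of_hasDerivAt_of_tendsto_nhdsGT
    (fun w (hw : 0 < w) => hasDerivAt_subordKernel ht.ne' hw a)
    ((((hint _).const_mul a).add ((hint _).const_mul (s / 2))).sub ((hint _).div_const t))
    (tendsto_subordKernel_nhdsGT_zero hs a) (tendsto_subordKernel_atTop ht a)
  rw [integral_sub, integral_add, integral_const_mul, integral_const_mul, integral_div, sub_zero,
    sub_eq_zero] at h
  · exact h
  all_goals fun_prop

lemma subordIntegral_recurrence_two (hs : 0 < s) (ht : 0 < t) (a : ℝ) :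
    subordIntegral s t (a + 2) / t ^ 2 - subordIntegral s t a / t
      = a * (a - 1) * subordIntegral s t (a - 2) + (a - 1) * s * subordIntegral s t (a - 3)
        + s ^ 2 / 4 * subordIntegral s t (a - 4) := by
  have h₁ := subordIntegral_recurrence hs ht (a - 1)
  have h₂ := subordIntegral_recurrence hs ht (a - 2)
  have h₃ := subordIntegral_recurrence hs ht (a + 1)
  ring_nf at h₁ h₂ h₃ ⊢
  linear_combination (-a) * h₁ - s / 2 * h₂ - h₃ / t

lemma hasDerivAt_subordKernel_fst {w : ℝ} (hw : 0 < w) (t a u : ℝ) :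
    HasDerivAt (fun u => subordKernel u t a w) (-(1 / 2) * subordKernel u t (a - 1) w) u := by
  have h : HasDerivAt (fun u => -u / (2 * w)) (-1 / (2 * w)) u :=
    ((hasDerivAt_id u).neg.div_const (2 * w)).congr_deriv (by ring)
  refine ((h.exp.const_mul (w ^ a)).mul_const (exp (-w ^ 2 / (2 * t)))).congr_deriv ?_
  rw [subordKernel, rpow_sub_one hw.ne']
  field_simp

lemma hasDerivAt_subordKernel_snd {w τ : ℝ} (hw : 0 < w) (hτ : τ ≠ 0) (s a : ℝ) :
    HasDerivAt (fun τ => subordKernel s τ a w) (subordKernel s τ (a + 2) w / (2 * τ ^ 2)) τ := by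
  have h : HasDerivAt (fun τ => -w ^ 2 / (2 * τ)) (w ^ 2 / (2 * τ ^ 2)) τ := by
    have e : (fun τ : ℝ => -w ^ 2 / (2 * τ)) = fun y => -w ^ 2 / 2 * y⁻¹ := by ext y; ring
    rw [e]
    exact ((hasDerivAt_inv hτ).const_mul _).congr_deriv (by ring)
  refine (h.exp.const_mul (w ^ a * exp (-s / (2 * w)))).congr_deriv ?_
  rw [subordKernel, show a + 2 = a + (2 : ℕ) by norm_num, rpow_add_natCast hw.ne']
  field_simp

lemma hasDerivAt_subordIntegral_fst (hs : 0 < s) (ht : 0 < t) (a : ℝ) :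
    HasDerivAt (fun u => subordIntegral u t a) (-(1 / 2) * subordIntegral s t (a - 1)) s := by
  have key := hasDerivAt_integral_of_dominated_loc_of_deriv_le (μ := volume.restrict (Ioi 0))
    (F := fun u w => subordKernel u t a w) (F' := fun u w => -(1 / 2) * subordKernel u t (a - 1) w)
    (bound := fun w => 1 / 2 * subordKernel (s / 2) t (a - 1) w) (x₀ := s)
    (Ioi_mem_nhds (half_lt_self hs))
    (.of_forall fun u => (continuousOn_subordKernel u t a).aestronglyMeasurable measurableSet_Ioi)
    (integrableOn_subordKernel hs ht a)
    (((continuousOn_subordKernel s t (a - 1)).const_mul _).aestronglyMeasurable measurableSet_Ioi)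
    ?_ ((integrableOn_subordKernel (half_pos hs) ht (a - 1)).const_mul _)
    ((ae_restrict_mem measurableSet_Ioi).mono fun w hw u _ => hasDerivAt_subordKernel_fst hw t a u)
  · rw [subordIntegral, ← integral_const_mul]
    exact key.2
  filter_upwards [ae_restrict_mem measurableSet_Ioi] with w (hw : 0 < w) u (hu : s / 2 < u)
  rw [norm_mul, norm_neg, Real.norm_of_nonneg (by norm_num),
    Real.norm_of_nonneg (subordKernel_nonneg hw.le _)]
  exact mul_le_mul_of_nonneg_left (subordKernel_anti_fst hw hu.le _) (by norm_num)

lemma hasDerivAt_subordIntegral_snd (hs : 0 < s) (ht : 0 < t) (a : ℝ) :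
    HasDerivAt (fun τ => subordIntegral s τ a) (subordIntegral s t (a + 2) / (2 * t ^ 2)) t := by
  have key := hasDerivAt_integral_of_dominated_loc_of_deriv_le (μ := volume.restrict (Ioi 0))
    (F := fun τ w => subordKernel s τ a w)
    (F' := fun τ w => subordKernel s τ (a + 2) w / (2 * τ ^ 2))
    (bound := fun w => subordKernel s (2 * t) (a + 2) w / (2 * (t / 2) ^ 2)) (x₀ := t)
    (Ioo_mem_nhds (half_lt_self ht) (by linarith : t < 2 * t))
    (.of_forall fun τ => (continuousOn_subordKernel s τ a).aestronglyMeasurable measurableSet_Ioi)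
    (integrableOn_subordKernel hs ht a)
    (((continuousOn_subordKernel s t (a + 2)).div_const _).aestronglyMeasurable measurableSet_Ioi)
    ?_ ((integrableOn_subordKernel hs (by positivity) (a + 2)).div_const _)
    ((ae_restrict_mem measurableSet_Ioi).mono fun w hw τ hτ =>
      hasDerivAt_subordKernel_snd hw (half_pos ht |>.trans hτ.1).ne' s a)
  · rw [subordIntegral, ← integral_div]
    exact key.2
  filter_upwards [ae_restrict_mem measurableSet_Ioi] with w (hw : 0 < w) τ ⟨hτ₁, hτ₂⟩
  have hτ : 0 < τ := (half_pos ht).trans hτ₁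
  rw [Real.norm_of_nonneg (div_nonneg (subordKernel_nonneg hw.le _) (by positivity))]
  refine div_le_div₀ (subordKernel_nonneg hw.le _) (subordKernel_mono_snd hw.le hτ hτ₂.le _)
    (by positivity) ?_
  gcongr

end SubordIntegral

lemma inv_sqrt_eq_rpow {v : ℝ} (hv : 0 ≤ v) : (√v)⁻¹ = v ^ (-(1 / 2 : ℝ)) := by
  rw [sqrt_eq_rpow, rpow_neg hv]

lemma prod_exp_div_sqrt {d : ℕ} (c : Fin d → ℝ) {v : ℝ} (hv : 0 ≤ v) :
    ∏ k, exp (c k) / √v = v ^ (-(d : ℝ) / 2) * exp (∑ k, c k) := by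
  simp only [div_eq_mul_inv, Finset.prod_mul_distrib, ← Real.exp_sum, Finset.prod_const,
    Finset.card_univ, Fintype.card_fin, inv_sqrt_eq_rpow hv, ← rpow_mul_natCast hv]
  ring_nf

lemma iterBMDensityVec_eq (d : ℕ) (x : Fin d → ℝ) {t : ℝ} (ht : 0 < t) :
    iterBMDensityVec d x t = 2 * (2 * π) ^ (-((d : ℝ) + 1) / 2) * t ^ (-(1 / 2 : ℝ))
      * subordIntegral (∑ k, x k ^ 2) t (-(d : ℝ) / 2) := by
  rw [iterBMDensityVec, subordIntegral, ← integral_const_mul, ← integral_const_mul]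
  refine setIntegral_congr_fun measurableSet_Ioi fun w (hw : 0 < w) => ?_
  have h2π : 0 ≤ 2 * π := by positivity
  simp only [prod_exp_div_sqrt _ (by positivity : 0 ≤ 2 * π * w)]
  simp only [div_eq_mul_inv (exp _) (√_), inv_sqrt_eq_rpow (by positivity : 0 ≤ 2 * π * t),
    mul_rpow h2π ht.le, mul_rpow h2π hw.le, ← Finset.sum_div, Finset.sum_neg_distrib, subordKernel]
  rw [show -((d : ℝ) + 1) / 2 = -(1 / 2) + -(d : ℝ) / 2 by ring, rpow_add (by positivity)]
  ring

lemma hasDerivAt_iterBMDensityVec_time (d : ℕ) {x : Fin d → ℝ} (hx : 0 < ∑ k, x k ^ 2) {t : ℝ}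
    (ht : 0 < t) :
    HasDerivAt (iterBMDensityVec d x)
      (2 * (2 * π) ^ (-((d : ℝ) + 1) / 2) * t ^ (-(1 / 2 : ℝ))
        * ((subordIntegral (∑ k, x k ^ 2) t (-(d : ℝ) / 2 + 2) / t ^ 2
          - subordIntegral (∑ k, x k ^ 2) t (-(d : ℝ) / 2) / t) / 2)) t := by
  have hp : (fun τ => 2 * (2 * π) ^ (-((d : ℝ) + 1) / 2) * τ ^ (-(1 / 2 : ℝ))
      * subordIntegral (∑ k, x k ^ 2) τ (-(d : ℝ) / 2)) =ᶠ[𝓝 t] iterBMDensityVec d x :=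
    (eventually_gt_nhds ht).mono fun τ hτ => (iterBMDensityVec_eq d x hτ).symm
  refine HasDerivAt.congr_of_eventuallyEq ?_ hp.symm
  refine ((((hasDerivAt_rpow_const (Or.inl ht.ne')).const_mul _).mul
    (hasDerivAt_subordIntegral_snd hx ht _))).congr_deriv ?_
  rw [rpow_sub_one ht.ne']
  field_simp
  ring

lemma laplacian_subordIntegral (d : ℕ) {t : ℝ} (ht : 0 < t) (a : ℝ) {x : Fin d → ℝ}
    (hx : 0 < ∑ k, x k ^ 2) :
    laplacian (fun y => subordIntegral (∑ k, y k ^ 2) t a) x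
      = -d * subordIntegral (∑ k, x k ^ 2) t (a - 1)
        + (∑ k, x k ^ 2) * subordIntegral (∑ k, x k ^ 2) t (a - 2) := by
  rw [laplacian_eq_of_radial (Φ' := fun u => -(1 / 2) * subordIntegral u t (a - 1))
    (Φ'' := fun u => 1 / 4 * subordIntegral u t (a - 2))
    (fun u hu => hasDerivAt_subordIntegral_fst hu ht a)
    (fun u hu => ((hasDerivAt_subordIntegral_fst hu ht (a - 1)).const_mul _).congr_deriv
      (by ring_nf)) (fun _ _ => rfl) hx]
  ring

lemma laplacian_laplacian_subordIntegral (d : ℕ) {t : ℝ} (ht : 0 < t) (a : ℝ)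
    {x : Fin d → ℝ} (hx : 0 < ∑ k, x k ^ 2) :
    laplacian (fun y => laplacian (fun z => subordIntegral (∑ k, z k ^ 2) t a) y) x
      = d * (d + 2) * subordIntegral (∑ k, x k ^ 2) t (a - 2)
        - 2 * (d + 2) * (∑ k, x k ^ 2) * subordIntegral (∑ k, x k ^ 2) t (a - 3)
        + (∑ k, x k ^ 2) ^ 2 * subordIntegral (∑ k, x k ^ 2) t (a - 4) := by
  have hI : ∀ b, ∀ u, 0 < u →
      HasDerivAt (fun u => subordIntegral u t b) (-(1 / 2) * subordIntegral u t (b - 1)) u :=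
    fun b u hu => hasDerivAt_subordIntegral_fst hu ht b
  rw [laplacian_eq_of_radial
    (Φ := fun u => -d * subordIntegral u t (a - 1) + u * subordIntegral u t (a - 2))
    (Φ' := fun u => (d / 2 + 1) * subordIntegral u t (a - 2) - u / 2 * subordIntegral u t (a - 3))
    (Φ'' := fun u => -(d + 4) / 4 * subordIntegral u t (a - 3) + u / 4 * subordIntegral u t (a - 4))
    (fun u hu => (((hI _ u hu).const_mul _).add ((hasDerivAt_id' u).mul (hI _ u hu))).congr_deriv
      (by ring_nf))
    (fun u hu => (((hI _ u hu).const_mul _).sub (((hasDerivAt_id' u).div_const 2).mul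
      (hI _ u hu))).congr_deriv (by ring_nf))
    (fun y hy => laplacian_subordIntegral d ht a hy) hx]
  ring

theorem iterBMDensityVec_pde_general (d : ℕ) :
    ∀ (x : Fin d → ℝ) (t : ℝ), x ≠ 0 → 0 < t →
      deriv (fun τ => iterBMDensityVec d x τ) t
        = (1 / 8) * laplacian (fun y => laplacian (fun z => iterBMDensityVec d z t) y) x := by
  intro x t hx ht
  have hs := sum_sq_pos_of_ne_zero hx
  rw [(hasDerivAt_iterBMDensityVec_time d hs ht).deriv,
    funext fun z => iterBMDensityVec_eq d z ht]
  set c := 2 * (2 * π) ^ (-((d : ℝ) + 1) / 2) * t ^ (-(1 / 2 : ℝ))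
  simp only [laplacian_const_mul]
  rw [laplacian_laplacian_subordIntegral d ht _ hs]
  linear_combination c / 2 * subordIntegral_recurrence_two hs ht (-(d : ℝ) / 2)

/-- Away from the origin, the joint density of `(B₁(|B(t)|), ..., B_d(|B(t)|))` satisfies
`∂p/∂t = (1/8)(∑_j ∂²/∂x_j²)² p`. -/
theorem iterBMDensityVec_pde (d : ℕ) (hd : 1 ≤ d) :
    ∀ (x : Fin d → ℝ) (t : ℝ), x ≠ 0 → 0 < t →
      deriv (fun τ => iterBMDensityVec d x τ) t
        = (1 / 8) * laplacian (fun y => laplacian (fun z => iterBMDensityVec d z t) y) x :=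
  iterBMDensityVec_pde_general d
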